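/- Let m be a positive integer and x a real number. Define polynomials R_n ∈ ℝ[z] by R_0 = 1, R_1 = z − x, and R_n = (z − ((2n−1)x + (n−1)m))·R_{n−1} − (n−1)^2·x·(x+m)·R_{n−2} for n ≥ 2. Let L : ℝ[z] → ℝ be the unique linear functional with L(z^n) = ω_n(x,m) for all n ≥ 0. Then L(R_i · R_j) = 0 whenever i ≠ j; that is, the bivariate geometric polynomials ω_n(x,m) are the moments of the orthogonal polynomial family (R_n). -/
import Mathlib

/-- Stirling numbers of the second kind:
`S(n,k) = (1/k!) ∑_{j=0}^k (−1)^{k−j} C(k,j) j^n`. -/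
noncomputable def stirling2 (n k : ℕ) : ℝ :=
  (1 / (k.factorial : ℝ)) *
    ∑ j ∈ Finset.range (k + 1), (-1 : ℝ) ^ (k - j) * (k.choose j) * (j : ℝ) ^ n

/-- Bivariate geometric polynomials `ω_n(x,m) = ∑_{k=0}^n k!·S(n,k)·x^k·m^{n−k}`. -/
noncomputable def geomPoly (n : ℕ) (x : ℝ) (m : ℕ) : ℝ :=
  ∑ k ∈ Finset.range (n + 1), (k.factorial : ℝ) * stirling2 n k * x ^ k * (m : ℝ) ^ (n - k)

/-- `R_0 = 1`, `R_1 = z − x`,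
`R_n = (z − ((2n−1)x + (n−1)m))·R_{n−1} − (n−1)²·x·(x+m)·R_{n−2}` for `n ≥ 2`. -/
noncomputable def geomPolyOP (m : ℕ) (x : ℝ) : ℕ → Polynomial ℝ
  | 0 => 1
  | 1 => Polynomial.X - Polynomial.C x
  | (n + 2) =>
      (Polynomial.X - Polynomial.C ((2 * ((n : ℝ) + 2) - 1) * x + ((n : ℝ) + 1) * m)) *
          geomPolyOP m x (n + 1) -
        Polynomial.C (((n : ℝ) + 1) ^ 2 * x * (x + m)) * geomPolyOP m x n

open Finset

noncomputable def Dp (n K : ℕ) : ℝ :=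
  ∑ j ∈ range (K + 1), (-1 : ℝ) ^ j * (K.choose j) * (j : ℝ) ^ n

noncomputable def Mp (n K : ℕ) : ℝ :=
  ∑ i ∈ range (K + 1), (-1 : ℝ) ^ i * (K.choose i) * ((i : ℝ) + 1) ^ n

lemma Dp_pascal (n K : ℕ) : Dp n (K + 1) = Dp n K - Mp n K := by
  have e1 : Dp n (K+1)
      = (∑ i ∈ range (K+1), (-1:ℝ) ^ (i+1) * ((K+1).choose (i+1)) * ((i+1:ℕ) : ℝ) ^ n)
        + (-1:ℝ) ^ 0 * ((K+1).choose 0) * ((0:ℕ) : ℝ) ^ n :=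
    Finset.sum_range_succ' (fun j => (-1:ℝ) ^ j * ((K+1).choose j) * (j : ℝ) ^ n) (K+1)
  have e2 : Dp n K
      = (∑ i ∈ range K, (-1:ℝ) ^ (i+1) * (K.choose (i+1)) * ((i+1:ℕ) : ℝ) ^ n)
        + (-1:ℝ) ^ 0 * (K.choose 0) * ((0:ℕ) : ℝ) ^ n :=
    Finset.sum_range_succ' (fun j => (-1:ℝ) ^ j * (K.choose j) * (j : ℝ) ^ n) K
  have hsplit : ∑ i ∈ range (K+1), (-1:ℝ) ^ (i+1) * ((K+1).choose (i+1)) * ((i+1:ℕ):ℝ) ^ n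
      = (∑ i ∈ range (K+1), (-1:ℝ) ^ (i+1) * (K.choose i) * ((i+1:ℕ):ℝ) ^ n)
        + ∑ i ∈ range (K+1), (-1:ℝ) ^ (i+1) * (K.choose (i+1)) * ((i+1:ℕ):ℝ) ^ n := by
    rw [← Finset.sum_add_distrib]
    refine Finset.sum_congr rfl fun i hi => ?_
    have hc : ((K+1).choose (i+1) : ℝ) = (K.choose i : ℝ) + (K.choose (i+1) : ℝ) := by
      exact_mod_cast congrArg (fun t : ℕ => (t : ℝ)) (Nat.choose_succ_succ K i)
    rw [hc]; ring
  have h1 : ∑ i ∈ range (K+1), (-1:ℝ) ^ (i+1) * (K.choose i) * ((i+1:ℕ):ℝ) ^ n = -Mp n K := by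
    unfold Mp
    rw [← Finset.sum_neg_distrib]
    refine Finset.sum_congr rfl fun i hi => ?_
    push_cast
    rw [pow_succ]; ring
  have h2 : ∑ i ∈ range (K+1), (-1:ℝ) ^ (i+1) * (K.choose (i+1)) * ((i+1:ℕ):ℝ) ^ n
      = ∑ i ∈ range K, (-1:ℝ) ^ (i+1) * (K.choose (i+1)) * ((i+1:ℕ):ℝ) ^ n := by
    rw [Finset.sum_range_succ, Nat.choose_succ_self]
    simp
  have e2' : ∑ i ∈ range K, (-1:ℝ) ^ (i+1) * (K.choose (i+1)) * ((i+1:ℕ):ℝ) ^ n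
      = Dp n K - (-1:ℝ) ^ 0 * (K.choose 0) * ((0:ℕ) : ℝ) ^ n := by rw [e2]; ring
  rw [e1, hsplit, h1, h2, e2']
  simp [Nat.choose_zero_right]
  ring

lemma Dp_succ_eq (n K : ℕ) : Dp (n + 1) (K + 1) = -((K : ℝ) + 1) * Mp n K := by
  have e1 : Dp (n+1) (K+1)
      = (∑ i ∈ range (K+1), (-1:ℝ) ^ (i+1) * ((K+1).choose (i+1)) * ((i+1:ℕ) : ℝ) ^ (n+1))
        + (-1:ℝ) ^ 0 * ((K+1).choose 0) * ((0:ℕ) : ℝ) ^ (n+1) :=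
    Finset.sum_range_succ' (fun j => (-1:ℝ) ^ j * ((K+1).choose j) * (j : ℝ) ^ (n+1)) (K+1)
  rw [e1]
  have h0 : ((0:ℕ) : ℝ) ^ (n+1) = 0 := by simp
  rw [h0, mul_zero, add_zero]
  rw [show -((K:ℝ)+1) * Mp n K = ∑ i ∈ range (K+1),
      -((K:ℝ)+1) * ((-1:ℝ) ^ i * (K.choose i) * ((i:ℝ)+1) ^ n) by
    rw [← Finset.mul_sum]; rfl]
  refine Finset.sum_congr rfl fun i hi => ?_
  have key : ((K + 1).choose (i + 1) : ℝ) * ((i : ℝ) + 1) = ((K : ℝ) + 1) * (K.choose i) := by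
    have h := Nat.add_one_mul_choose_eq K i
    have hc : (((K + 1) * K.choose i : ℕ) : ℝ) = (((K + 1).choose (i + 1) * (i + 1) : ℕ) : ℝ) := by
      exact_mod_cast congrArg (fun t : ℕ => (t : ℝ)) h
    push_cast at hc
    linarith
  push_cast
  calc (-1:ℝ) ^ (i+1) * ((K + 1).choose (i + 1)) * ((i:ℝ) + 1) ^ (n+1)
      = ((-1:ℝ) ^ i * (-1)) * ((((K + 1).choose (i + 1) : ℝ)) * ((i:ℝ)+1)) * ((i:ℝ)+1) ^ n := by
        rw [pow_succ, pow_succ]; ring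
    _ = ((-1:ℝ) ^ i * (-1)) * (((K : ℝ) + 1) * (K.choose i)) * ((i:ℝ)+1) ^ n := by rw [key]
    _ = -((K:ℝ) + 1) * ((-1:ℝ) ^ i * (K.choose i) * ((i:ℝ)+1) ^ n) := by ring

lemma stirling2_eq_Dp (n K : ℕ) :
    stirling2 n K = (-1 : ℝ) ^ K / K.factorial * Dp n K := by
  unfold stirling2 Dp
  rw [Finset.mul_sum, Finset.mul_sum]
  refine Finset.sum_congr rfl fun j hj => ?_
  have hjK : j ≤ K := by simpa [Nat.lt_succ_iff] using Finset.mem_range.1 hj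
  have hs : (-1 : ℝ) ^ (K - j) = (-1 : ℝ) ^ K * (-1 : ℝ) ^ j := by
    have h2 : (-1 : ℝ) ^ K * (-1:ℝ) ^ j = (-1:ℝ) ^ (K + j) := by rw [pow_add]
    have h3 : K + j = (K - j) + 2 * j := by omega
    rw [h2, h3, pow_add, pow_mul]
    norm_num
  rw [hs]; ring

lemma Dp_rec (n K : ℕ) :
    Dp (n + 1) (K + 1) = ((K : ℝ) + 1) * (Dp n (K + 1) - Dp n K) := by
  have h1 := Dp_succ_eq n K
  have h2 := Dp_pascal n K
  have : Mp n K = Dp n K - Dp n (K + 1) := by linarith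
  rw [h1, this]; ring

lemma Dp_zero_eq (K : ℕ) : Dp 0 (K + 1) = 0 := by
  have h := add_pow (-1 : ℝ) 1 (K + 1)
  simp only [one_pow, mul_one] at h
  have h0 : ((-1 : ℝ) + 1) ^ (K + 1) = 0 := by norm_num
  rw [h0] at h
  unfold Dp
  simp only [pow_zero, mul_one]
  linarith [h]

lemma Dp_vanish : ∀ n K, n < K → Dp n K = 0 := by
  intro n
  induction n with
  | zero =>
    intro K hK
    obtain ⟨K', rfl⟩ : ∃ K', K = K' + 1 := ⟨K - 1, by omega⟩
    exact Dp_zero_eq K'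
  | succ n ih =>
    intro K hK
    obtain ⟨K', rfl⟩ : ∃ K', K = K' + 1 := ⟨K - 1, by omega⟩
    rw [Dp_rec, ih K' (by omega), ih (K' + 1) (by omega)]
    ring

lemma stirling2_vanish {n K : ℕ} (h : n < K) : stirling2 n K = 0 := by
  rw [stirling2_eq_Dp, Dp_vanish n K h, mul_zero]

lemma stirling2_succ_zero (k : ℕ) : stirling2 (k + 1) 0 = 0 := by
  unfold stirling2
  simp

lemma stirling2_rec (n K : ℕ) :
    stirling2 (n + 1) (K + 1) = ((K : ℝ) + 1) * stirling2 n (K + 1) + stirling2 n K := by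
  have hKf : ((K.factorial : ℝ)) ≠ 0 := by exact_mod_cast K.factorial_ne_zero
  have hKf1 : (((K+1).factorial : ℝ)) ≠ 0 := by exact_mod_cast (K+1).factorial_ne_zero
  rw [stirling2_eq_Dp, stirling2_eq_Dp, stirling2_eq_Dp, Dp_rec]
  have hfac : ((K+1).factorial : ℝ) = ((K:ℝ) + 1) * K.factorial := by
    rw [Nat.factorial_succ]; push_cast; ring
  rw [hfac]
  have hK1 : ((K:ℝ) + 1) ≠ 0 := by positivity
  field_simp
  ring

lemma dF_mul (j n : ℕ) :
    j * j.descFactorial n = j.descFactorial (n+1) + n * j.descFactorial n := by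
  rw [Nat.descFactorial_succ]
  rcases Nat.lt_or_ge j n with h | h
  · rw [Nat.descFactorial_eq_zero_iff_lt.2 h]; simp
  · have : j - n + n = j := by omega
    calc j * j.descFactorial n = (j - n + n) * j.descFactorial n := by rw [this]
      _ = (j - n) * j.descFactorial n + n * j.descFactorial n := by ring

lemma dF_key (j n : ℕ) :
    (j+1) * (j+1).descFactorial n
      = j.descFactorial (n+1) + (2*n+1) * j.descFactorial n + n^2 * j.descFactorial (n-1) := by
  cases n with
  | zero => simp [Nat.descFactorial_succ, Nat.descFactorial_zero]
  | succ p =>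
    rw [Nat.succ_descFactorial_succ]
    have h1 : j.descFactorial (p + 1 + 1) = (j - (p+1)) * ((j - p) * j.descFactorial p) := by
      rw [Nat.descFactorial_succ, Nat.descFactorial_succ]
    have h2 : j.descFactorial (p + 1) = (j - p) * j.descFactorial p := Nat.descFactorial_succ j p
    have h3 : (p + 1 : ℕ) - 1 = p := rfl
    rw [h1, h2, h3]
    rcases Nat.lt_or_ge j p with h | h
    · rw [Nat.descFactorial_eq_zero_iff_lt.2 h]; ring
    · rcases Nat.lt_or_ge j (p+1) with h' | h'
      · have hjp : j = p := by omega
        subst hjp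
        have : j - j = 0 := by omega
        rw [this]; ring_nf
      · obtain ⟨a, rfl⟩ : ∃ a, j = p + 1 + a := ⟨j - (p+1), by omega⟩
        have e1 : p + 1 + a - (p + 1) = a := by omega
        have e2 : p + 1 + a - p = a + 1 := by omega
        rw [e1, e2]; ring

lemma cfac_key (j n : ℕ) :
    (j+1).factorial * (j+1).descFactorial n
      = j.factorial * j.descFactorial (n+1) + (2*n+1) * (j.factorial * j.descFactorial n)
        + n^2 * (j.factorial * j.descFactorial (n-1)) := by
  rw [Nat.factorial_succ]
  calc (j+1) * j.factorial * (j+1).descFactorial n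
      = j.factorial * ((j+1) * (j+1).descFactorial n) := by ring
    _ = j.factorial * (j.descFactorial (n+1) + (2*n+1) * j.descFactorial n
          + n^2 * j.descFactorial (n-1)) := by rw [dF_key]
    _ = _ := by ring

lemma cfac_mul (j n : ℕ) :
    j * (j.factorial * j.descFactorial n)
      = j.factorial * j.descFactorial (n+1) + n * (j.factorial * j.descFactorial n) := by
  calc j * (j.factorial * j.descFactorial n) = j.factorial * (j * j.descFactorial n) := by ring
    _ = j.factorial * (j.descFactorial (n+1) + n * j.descFactorial n) := by rw [dF_mul]
    _ = _ := by ring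

/-- modified moments (without the `(x+m)^n` factor) -/
noncomputable def Tf (x : ℝ) (m : ℕ) (k n : ℕ) : ℝ :=
  ∑ j ∈ Finset.range (k+1),
    ((j.factorial * j.descFactorial n : ℕ) : ℝ) * stirling2 k j * x^j * (m:ℝ)^(k-j)

lemma Tf_rec (x : ℝ) (m k n : ℕ) :
    Tf x m (k+1) n = (x + (m:ℝ)) * Tf x m k (n+1)
      + ((2*(n:ℝ)+1)*x + (n:ℝ)*(m:ℝ)) * Tf x m k n
      + (n:ℝ)^2 * x * Tf x m k (n-1) := by
  have hc : ∀ i : ℕ, (((i+1).factorial * (i+1).descFactorial n : ℕ) : ℝ)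
      = ((i.factorial * i.descFactorial (n+1) : ℕ) : ℝ)
        + (2*(n:ℝ)+1) * ((i.factorial * i.descFactorial n : ℕ) : ℝ)
        + (n:ℝ)^2 * ((i.factorial * i.descFactorial (n-1) : ℕ) : ℝ) := by
    intro i
    have h2 := congrArg (fun t : ℕ => (t:ℝ)) (cfac_key i n)
    push_cast at h2 ⊢
    linarith
  have hm : ∀ j : ℕ, (j:ℝ) * ((j.factorial * j.descFactorial n : ℕ) : ℝ)
      = ((j.factorial * j.descFactorial (n+1) : ℕ) : ℝ)
        + (n:ℝ) * ((j.factorial * j.descFactorial n : ℕ) : ℝ) := by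
    intro j
    have h2 := congrArg (fun t : ℕ => (t:ℝ)) (cfac_mul j n)
    push_cast at h2 ⊢
    linarith
  have e1 : Tf x m (k+1) n
      = ∑ i ∈ Finset.range (k+1),
          (((i+1).factorial * (i+1).descFactorial n : ℕ) : ℝ) * stirling2 (k+1) (i+1)
            * x^(i+1) * (m:ℝ)^(k+1-(i+1))
        + ((Nat.factorial 0 * Nat.descFactorial 0 n : ℕ) : ℝ) * stirling2 (k+1) 0
            * x^0 * (m:ℝ)^(k+1-0) := by
    exact Finset.sum_range_succ'
      (fun j => ((j.factorial * j.descFactorial n : ℕ) : ℝ) * stirling2 (k+1) j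
        * x^j * (m:ℝ)^(k+1-j)) (k+1)
  rw [e1, stirling2_succ_zero]
  simp only [mul_zero, zero_mul, add_zero]
  have esplit : ∀ i ∈ Finset.range (k+1),
      (((i+1).factorial * (i+1).descFactorial n : ℕ) : ℝ) * stirling2 (k+1) (i+1)
          * x^(i+1) * (m:ℝ)^(k+1-(i+1))
      = ((i:ℝ)+1) * (((i+1).factorial * (i+1).descFactorial n : ℕ) : ℝ) * stirling2 k (i+1)
          * x^(i+1) * (m:ℝ)^(k-i)
        + (((i+1).factorial * (i+1).descFactorial n : ℕ) : ℝ) * stirling2 k i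
          * x^(i+1) * (m:ℝ)^(k-i) := by
    intro i hi
    have hsub : k+1-(i+1) = k-i := by omega
    rw [hsub, stirling2_rec k i]; ring
  rw [Finset.sum_congr rfl esplit, Finset.sum_add_distrib]
  have hA : ∑ i ∈ Finset.range (k+1),
        ((i:ℝ)+1) * (((i+1).factorial * (i+1).descFactorial n : ℕ) : ℝ) * stirling2 k (i+1)
          * x^(i+1) * (m:ℝ)^(k-i)
      = (m:ℝ) * Tf x m k (n+1) + (n:ℝ) * (m:ℝ) * Tf x m k n := by
    have eg : ∑ j ∈ Finset.range (k+2),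
          (j:ℝ) * ((j.factorial * j.descFactorial n : ℕ) : ℝ) * stirling2 k j
            * x^j * (m:ℝ)^(k+1-j)
        = ∑ i ∈ Finset.range (k+1),
            (((i+1:ℕ)):ℝ) * (((i+1).factorial * (i+1).descFactorial n : ℕ) : ℝ)
              * stirling2 k (i+1) * x^(i+1) * (m:ℝ)^(k+1-(i+1))
          + ((0:ℕ):ℝ) * ((Nat.factorial 0 * Nat.descFactorial 0 n : ℕ):ℝ) * stirling2 k 0
              * x^0 * (m:ℝ)^(k+1-0) :=
      Finset.sum_range_succ'
        (fun j => (j:ℝ) * ((j.factorial * j.descFactorial n : ℕ) : ℝ) * stirling2 k j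
          * x^j * (m:ℝ)^(k+1-j)) (k+1)
    have etop : ∑ j ∈ Finset.range (k+2),
          (j:ℝ) * ((j.factorial * j.descFactorial n : ℕ) : ℝ) * stirling2 k j
            * x^j * (m:ℝ)^(k+1-j)
        = ∑ j ∈ Finset.range (k+1),
          (j:ℝ) * ((j.factorial * j.descFactorial n : ℕ) : ℝ) * stirling2 k j
            * x^j * (m:ℝ)^(k+1-j) := by
      rw [Finset.sum_range_succ, stirling2_vanish (Nat.lt_succ_self k)]
      simp
    have hgoal : ∑ i ∈ Finset.range (k+1),
        ((i:ℝ)+1) * (((i+1).factorial * (i+1).descFactorial n : ℕ) : ℝ) * stirling2 k (i+1)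
          * x^(i+1) * (m:ℝ)^(k-i)
        = ∑ i ∈ Finset.range (k+1),
            (((i+1:ℕ)):ℝ) * (((i+1).factorial * (i+1).descFactorial n : ℕ) : ℝ)
              * stirling2 k (i+1) * x^(i+1) * (m:ℝ)^(k+1-(i+1)) := by
      refine Finset.sum_congr rfl fun i hi => ?_
      have hsub : k+1-(i+1) = k-i := by omega
      rw [hsub]; push_cast; ring
    rw [hgoal]
    have : ∑ i ∈ Finset.range (k+1),
            (((i+1:ℕ)):ℝ) * (((i+1).factorial * (i+1).descFactorial n : ℕ) : ℝ)
              * stirling2 k (i+1) * x^(i+1) * (m:ℝ)^(k+1-(i+1))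
        = ∑ j ∈ Finset.range (k+1),
          (j:ℝ) * ((j.factorial * j.descFactorial n : ℕ) : ℝ) * stirling2 k j
            * x^j * (m:ℝ)^(k+1-j) := by
      rw [← etop, eg]
      simp
    rw [this]
    unfold Tf
    rw [Finset.mul_sum, Finset.mul_sum, ← Finset.sum_add_distrib]
    refine Finset.sum_congr rfl fun j hj => ?_
    have hjk : j ≤ k := by simpa [Nat.lt_succ_iff] using Finset.mem_range.1 hj
    have hsub : k+1-j = (k-j)+1 := by omega
    rw [hsub, pow_succ]
    calc (j:ℝ) * ((j.factorial * j.descFactorial n : ℕ) : ℝ) * stirling2 k j * x^j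
          * ((m:ℝ)^(k-j) * m)
        = ((j:ℝ) * ((j.factorial * j.descFactorial n : ℕ) : ℝ)) * (stirling2 k j * x^j
          * ((m:ℝ)^(k-j) * m)) := by ring
      _ = (((j.factorial * j.descFactorial (n+1) : ℕ) : ℝ)
            + (n:ℝ) * ((j.factorial * j.descFactorial n : ℕ) : ℝ)) * (stirling2 k j * x^j
          * ((m:ℝ)^(k-j) * m)) := by rw [hm j]
      _ = _ := by ring
  have hB : ∑ i ∈ Finset.range (k+1),
        (((i+1).factorial * (i+1).descFactorial n : ℕ) : ℝ) * stirling2 k i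
          * x^(i+1) * (m:ℝ)^(k-i)
      = x * Tf x m k (n+1) + (2*(n:ℝ)+1) * x * Tf x m k n
        + (n:ℝ)^2 * x * Tf x m k (n-1) := by
    unfold Tf
    rw [Finset.mul_sum, Finset.mul_sum, Finset.mul_sum, ← Finset.sum_add_distrib,
      ← Finset.sum_add_distrib]
    refine Finset.sum_congr rfl fun i hi => ?_
    rw [hc i, pow_succ]
    ring
  rw [hA, hB]
  ring

noncomputable def nuf (x : ℝ) (m : ℕ) (k n : ℕ) : ℝ := (x + (m:ℝ))^n * Tf x m k n

lemma nuf_zero (x : ℝ) (m k : ℕ) : nuf x m k 0 = geomPoly k x m := by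
  unfold nuf Tf geomPoly
  rw [pow_zero, one_mul]
  refine Finset.sum_congr rfl fun j hj => ?_
  simp [Nat.descFactorial_zero]

lemma nuf_vanish (x : ℝ) (m : ℕ) {k n : ℕ} (h : k < n) : nuf x m k n = 0 := by
  unfold nuf Tf
  rw [Finset.sum_eq_zero, mul_zero]
  intro j hj
  have hjk : j ≤ k := by simpa [Nat.lt_succ_iff] using Finset.mem_range.1 hj
  have : j.descFactorial n = 0 := Nat.descFactorial_eq_zero_iff_lt.2 (by omega)
  rw [this]
  simp

lemma nuf_rec0 (x : ℝ) (m k : ℕ) :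
    nuf x m (k+1) 0 = nuf x m k 1 + x * nuf x m k 0 := by
  unfold nuf
  have h := Tf_rec x m k 0
  norm_num at h
  rw [h]
  ring

lemma nuf_recS (x : ℝ) (m k p : ℕ) :
    nuf x m (k+1) (p+1) = nuf x m k (p+2)
      + ((2*(p:ℝ)+3)*x + ((p:ℝ)+1)*(m:ℝ)) * nuf x m k (p+1)
      + ((p:ℝ)+1)^2 * x * (x + (m:ℝ)) * nuf x m k p := by
  unfold nuf
  have h := Tf_rec x m k (p+1)
  have hps : (p+1) - 1 = p := rfl
  rw [hps] at h
  push_cast at h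
  rw [h]
  ring

lemma degR (m : ℕ) (x : ℝ) : ∀ n, (geomPolyOP m x n).natDegree ≤ n := by
  intro n
  induction n using Nat.strong_induction_on with
  | _ n ih =>
    match n with
    | 0 => simp [geomPolyOP]
    | 1 =>
      show (Polynomial.X - Polynomial.C x).natDegree ≤ 1
      exact le_of_eq (Polynomial.natDegree_X_sub_C x)
    | (n+2) =>
      show ((Polynomial.X - Polynomial.C ((2 * ((n : ℝ) + 2) - 1) * x + ((n : ℝ) + 1) * m)) *
          geomPolyOP m x (n + 1) -
        Polynomial.C (((n : ℝ) + 1) ^ 2 * x * (x + m)) * geomPolyOP m x n).natDegree ≤ n + 2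
      refine le_trans (Polynomial.natDegree_sub_le _ _) (sup_le ?_ ?_)
      · refine le_trans (Polynomial.natDegree_mul_le) ?_
        have h1 : (Polynomial.X - Polynomial.C ((2 * ((n : ℝ) + 2) - 1) * x
            + ((n : ℝ) + 1) * m)).natDegree = 1 := Polynomial.natDegree_X_sub_C _
        rw [h1]
        have := ih (n+1) (by omega)
        omega
      · refine le_trans (Polynomial.natDegree_mul_le) ?_
        have h1 : (Polynomial.C (((n : ℝ) + 1) ^ 2 * x * (x + m))).natDegree = 0 :=
          Polynomial.natDegree_C _
        rw [h1]
        have := ih n (by omega)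
        omega

lemma moments (m : ℕ) (x : ℝ) (L : Polynomial ℝ →ₗ[ℝ] ℝ)
    (hL : ∀ n : ℕ, L (Polynomial.X ^ n) = geomPoly n x m) :
    ∀ n k, L (Polynomial.X ^ k * geomPolyOP m x n) = nuf x m k n := by
  intro n
  induction n using Nat.strong_induction_on with
  | _ n ih =>
    match n with
    | 0 =>
      intro k
      show L (Polynomial.X ^ k * 1) = _
      rw [mul_one, hL, nuf_zero]
    | 1 =>
      intro k
      show L (Polynomial.X ^ k * (Polynomial.X - Polynomial.C x)) = _
      have e : (Polynomial.X : Polynomial ℝ)^k * (Polynomial.X - Polynomial.C x)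
          = Polynomial.X^(k+1) - x • (Polynomial.X^k) := by
        rw [Polynomial.smul_eq_C_mul]; ring
      rw [e, map_sub, map_smul, hL, hL]
      have h0 := nuf_rec0 x m k
      rw [nuf_zero, nuf_zero] at h0
      rw [smul_eq_mul]
      linarith
    | (n+2) =>
      intro k
      show L (Polynomial.X ^ k *
        ((Polynomial.X - Polynomial.C ((2 * ((n : ℝ) + 2) - 1) * x + ((n : ℝ) + 1) * m)) *
          geomPolyOP m x (n + 1) -
          Polynomial.C (((n : ℝ) + 1) ^ 2 * x * (x + m)) * geomPolyOP m x n)) = _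
      have e : Polynomial.X ^ k *
          ((Polynomial.X - Polynomial.C ((2 * ((n : ℝ) + 2) - 1) * x + ((n : ℝ) + 1) * m)) *
            geomPolyOP m x (n + 1) -
            Polynomial.C (((n : ℝ) + 1) ^ 2 * x * (x + m)) * geomPolyOP m x n)
          = Polynomial.X ^ (k+1) * geomPolyOP m x (n+1)
            - ((2 * ((n : ℝ) + 2) - 1) * x + ((n : ℝ) + 1) * m) •
                (Polynomial.X ^ k * geomPolyOP m x (n+1))
            - (((n : ℝ) + 1) ^ 2 * x * (x + m)) • (Polynomial.X ^ k * geomPolyOP m x n) := by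
        rw [Polynomial.smul_eq_C_mul, Polynomial.smul_eq_C_mul]; ring
      rw [e, map_sub, map_sub, map_smul, map_smul,
        ih (n+1) (by omega) (k+1), ih (n+1) (by omega) k, ih n (by omega) k]
      have h := nuf_recS x m k n
      rw [smul_eq_mul, smul_eq_mul]
      rw [h]
      ring

/-- The bivariate geometric polynomials `ω_n(x,m)` are the moments of the orthogonal
family `R_n`. -/
theorem geomPoly_moments (m : ℕ) (hm : 0 < m) (x : ℝ)
    (L : Polynomial ℝ →ₗ[ℝ] ℝ)
    (hL : ∀ n : ℕ, L (Polynomial.X ^ n) = geomPoly n x m) :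
    ∀ i j : ℕ, i ≠ j → L (geomPolyOP m x i * geomPolyOP m x j) = 0 := by
  have aux : ∀ i j : ℕ, i < j → L (geomPolyOP m x i * geomPolyOP m x j) = 0 := by
    intro i j hij
    have hdeg : (geomPolyOP m x i).natDegree < i + 1 := Nat.lt_succ_of_le (degR m x i)
    rw [Polynomial.as_sum_range' _ _ hdeg, Finset.sum_mul, map_sum]
    refine Finset.sum_eq_zero fun k hk => ?_
    have hkj : k < j := lt_of_le_of_lt (Nat.lt_succ_iff.1 (Finset.mem_range.1 hk)) hij
    rw [← Polynomial.C_mul_X_pow_eq_monomial, mul_assoc, ← Polynomial.smul_eq_C_mul, map_smul,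
      moments m x L hL j k, nuf_vanish x m hkj, smul_zero]
  intro i j hij
  rcases lt_trichotomy i j with h | h | h
  · exact aux i j h
  · exact absurd h hij
  · rw [mul_comm]
    exact aux j i h
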